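/- Let f : X → ℝ have maximum f* = sup_{x∈X} f(x) attained at x*, and let ℓ be a dissimilarity function such that f* − f(y) ≤ f* − f(x) + max{f* − f(x), ℓ(x,y)} for all x,y ∈ X (weak Lipschitzness). Suppose P ⊆ X is a cell with diameter at most ν₁ρ^h (i.e., ℓ(x,y) ≤ ν₁ρ^h for all x,y ∈ P) and sup_{x∈P} f(x) ≥ f* − c·ν₁ρ^h for some c ≥ 0. Then every y ∈ P satisfies f* − f(y) ≤ max{2c, c+1}·ν₁ρ^h. -/

import Mathlib

/-!
Weak Lipschitzness applied at a point `x` of the cell that nearly attains `sup_P f`, within `t > c D`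
of `f*` (where `D = ν₁ ρ^h`), bounds the gap at any `y ∈ P` by `t + max t D`; letting `t ↓ c D` gives
`c D + max (c D) D`, which is `(c + 1) D` or `2 c D` according as `c ≤ 1` or not.
-/

open Filter Topology

lemma le_add_max_of_forall_lt {g a D : ℝ} (hg : ∀ t, a < t → g ≤ t + max t D) :
    g ≤ a + max a D := by
  have hcont : Continuous fun t : ℝ => t + max t D := by fun_prop
  exact ge_of_tendsto (hcont.tendsto a |>.mono_left nhdsWithin_le_nhds)
    (eventually_nhdsWithin_of_forall fun t (ht : t ∈ Set.Ioi a) => hg t ht)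

lemma add_max_le_max_mul {c D : ℝ} (hD : 0 ≤ D) :
    c * D + max (c * D) D ≤ max (2 * c) (c + 1) * D := by
  rcases le_total (c * D) D with h | h
  · rw [max_eq_right h]
    nlinarith [le_max_right (2 * c) (c + 1)]
  · rw [max_eq_left h]
    nlinarith [le_max_left (2 * c) (c + 1)]

theorem stmt_4_general {X : Type*} (f : X → ℝ) (ℓ : X → X → ℝ) (fstar : ℝ)
    (hweak : ∀ x y, fstar - f y ≤ (fstar - f x) + max (fstar - f x) (ℓ x y))
    (ν₁ ρ : ℝ) (hν : 0 < ν₁) (hρ : ρ ∈ Set.Ioo (0:ℝ) 1) (h : ℕ)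
    (P : Set X)
    (hdiam : ∀ x ∈ P, ∀ y ∈ P, ℓ x y ≤ ν₁ * ρ ^ h)
    (c : ℝ)
    (hsup : fstar - c * ν₁ * ρ ^ h ≤ sSup (f '' P)) :
    ∀ y ∈ P, fstar - f y ≤ max (2 * c) (c + 1) * (ν₁ * ρ ^ h) := by
  intro y hy
  set D := ν₁ * ρ ^ h
  have hD : 0 ≤ D := by have := hρ.1; positivity
  have happrox : ∀ t, c * D < t → fstar - f y ≤ t + max t D := by
    intro t ht
    obtain ⟨_, ⟨x, hx, rfl⟩, hfx⟩ :=
      exists_lt_of_lt_csSup (Set.Nonempty.image f ⟨y, hy⟩) (show fstar - t < sSup (f '' P) by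
        linarith [mul_assoc c ν₁ (ρ ^ h)])
    calc fstar - f y ≤ (fstar - f x) + max (fstar - f x) (ℓ x y) := hweak x y
      _ ≤ t + max t D := by
        have hxt : fstar - f x ≤ t := by linarith
        gcongr
        exact hdiam x hx y hy
  exact (le_add_max_of_forall_lt happrox).trans (add_max_le_max_mul hD)

theorem stmt_4 {X : Type*} (f : X → ℝ) (ℓ : X → X → ℝ) (fstar : ℝ) (xstar : X)
    (hmax : f xstar = fstar) (hub : ∀ x, f x ≤ fstar)
    (hweak : ∀ x y, fstar - f y ≤ (fstar - f x) + max (fstar - f x) (ℓ x y))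
    (ν₁ ρ : ℝ) (hν : 0 < ν₁) (hρ : ρ ∈ Set.Ioo (0:ℝ) 1) (h : ℕ)
    (P : Set X) (hPne : P.Nonempty) (hPbdd : BddAbove (f '' P))
    (hdiam : ∀ x ∈ P, ∀ y ∈ P, ℓ x y ≤ ν₁ * ρ ^ h)
    (c : ℝ) (hc : 0 ≤ c)
    (hsup : fstar - c * ν₁ * ρ ^ h ≤ sSup (f '' P)) :
    ∀ y ∈ P, fstar - f y ≤ max (2 * c) (c + 1) * (ν₁ * ρ ^ h) :=
  stmt_4_general f ℓ fstar hweak ν₁ ρ hν hρ h P hdiam c hsup
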